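/- arXiv:1705.10992 — 3 statements merged into one kernel-verified Lean document; each statement's English description precedes it below -/
import Mathlib

section
/- Assume (B). Then for every fixed r₀ > 0 there exists a constant C₆ = C₆(r₀) ≥ 1 such that f(s − r₀) ≤ C₆ f(s) for all s ≥ 3r₀. -/
open MeasureTheory Set Filter Metric Topology
open scoped ENNReal

noncomputable section

abbrev Vec (d : ℕ) : Type := EuclideanSpace ℝ (Fin d)

/-- ν is a Lévy density on ℝ^d: measurable, nonnegative, with ∫ min(1,|y|²) ν(y) dy < ∞. -/
structure IsLevyDensity (d : ℕ) (ν : Vec d → ℝ) : Prop where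
  meas : Measurable ν
  nonneg : ∀ y, 0 ≤ ν y
  integ : Integrable (fun y : Vec d => min 1 (‖y‖ ^ 2) * ν y)

/-- Re Φ(ξ) = ∫ (1 − cos⟨ξ,y⟩) ν(y) dy. -/
noncomputable def rePhi (d : ℕ) (ν : Vec d → ℝ) (ξ : Vec d) : ℝ :=
  ∫ y, (1 - Real.cos ((inner ℝ ξ y : ℝ))) * ν y

/-- Ψ(r) = sup_{|ξ| ≤ r} Re Φ(ξ). -/
noncomputable def bigPsi (d : ℕ) (ν : Vec d → ℝ) (r : ℝ) : ℝ :=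
  sSup (rePhi d ν '' Metric.closedBall 0 r)

/-- Ψ₋(s) = sup {r > 0 : Ψ(r) = s}, the generalized right inverse of Ψ. -/
noncomputable def psiMinus (d : ℕ) (ν : Vec d → ℝ) (s : ℝ) : ℝ :=
  sSup {r : ℝ | 0 < r ∧ bigPsi d ν r = s}

/-- h(t) = 1/Ψ₋(1/t). -/
noncomputable def hScale (d : ℕ) (ν : Vec d → ℝ) (t : ℝ) : ℝ :=
  1 / psiMinus d ν (1 / t)

/-- K(r) = sup_{|x|>1} (∫_{|x−y|>r, |y|>r} f(|x−y|) f(|y|) dy) / f(|x|), valued in [0,∞]. -/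
noncomputable def bigK (d : ℕ) (f : ℝ → ℝ) (r : ℝ) : ℝ≥0∞ :=
  ⨆ x ∈ {x : Vec d | 1 < ‖x‖},
    (∫⁻ y in {y : Vec d | r < ‖x - y‖ ∧ r < ‖y‖}, ENNReal.ofReal (f ‖x - y‖ * f ‖y‖)) /
      ENNReal.ofReal (f ‖x‖)

/-- Assumption (B). -/
structure AssumptionB (d : ℕ) (ν : Vec d → ℝ) (f : ℝ → ℝ) (C₀ : ℝ) : Prop where
  f_pos : ∀ s : ℝ, 0 < s → 0 < f s
  f_anti : ∀ s t : ℝ, 0 < s → s ≤ t → f t ≤ f s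
  C₀_pos : 0 < C₀
  dom : ∀ x : Vec d, x ≠ 0 → ν x ≤ C₀ * f ‖x‖
  liminf_pos :
    0 < Filter.liminf
      (fun r : ℝ => (∫ x in {x : Vec d | r < ‖x‖}, ν x) / (f r * r ^ d))
      (nhdsWithin 0 (Set.Ioi 0))
  K_zero : Filter.Tendsto (bigK d f) Filter.atTop (nhds 0)

/-- Assumption (C). -/
structure AssumptionC (d : ℕ) (ν : Vec d → ℝ) (f : ℝ → ℝ) (E : Set (Vec d)) (κ C₁ : ℝ) : Prop where
  sub : E ⊆ Metric.sphere (0 : Vec d) 1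
  κ_nonneg : 0 ≤ κ
  conv : ∀ θ ∈ E, ∀ y : Vec d,
    Filter.Tendsto (fun r : ℝ => ν (r • θ - y) / ν (r • θ)) Filter.atTop
      (nhds (Real.exp (κ * (inner ℝ θ y : ℝ))))
  C₁_pos : 0 < C₁
  lower : ∀ x : Vec d, x ≠ 0 → ‖x‖⁻¹ • x ∈ E → C₁ * f ‖x‖ ≤ ν x

/-- Assumption (D). -/
structure AssumptionD (d : ℕ) (ν : Vec d → ℝ) (T : Set ℝ) (C₂ : ℝ) : Prop where
  nonempty : T.Nonempty
  bounded : Bornology.IsBounded T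
  sub : T ⊆ Set.Ioi (0 : ℝ)
  C₂_pos : 0 < C₂
  bound : ∀ t ∈ T,
    (∫ ξ : Vec d, Real.exp (-t * rePhi d ν ξ) * ‖ξ‖) ≤ C₂ * psiMinus d ν (1 / t) ^ (d + 1)

/-- The quadratic form ⟨ξ, Aξ⟩ of a d×d matrix. -/
def quadA {d : ℕ} (A : Matrix (Fin d) (Fin d) ℝ) (ξ : Vec d) : ℝ :=
  ∑ i, ∑ j, ξ i * A i j * ξ j

/-- Assumption (A): A symmetric nonnegative definite, and A = 0 or uniformly elliptic. -/
structure AssumptionA {d : ℕ} (A : Matrix (Fin d) (Fin d) ℝ) : Prop where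
  symm : A.IsSymm
  nonneg : ∀ ξ : Vec d, 0 ≤ quadA A ξ
  alt : A = 0 ∨ ∃ c > 0, ∀ ξ : Vec d, ‖ξ‖ = 1 → c ≤ quadA A ξ

/-- Φ(ξ) = ∫ (1 − e^{i⟨ξ,y⟩} + i⟨ξ,y⟩1_{B(0,1)}(y)) ν(y) dy. -/
noncomputable def levyPhi (d : ℕ) (ν : Vec d → ℝ) (ξ : Vec d) : ℂ :=
  ∫ y, (1 - Complex.exp (Complex.I * ((inner ℝ ξ y : ℝ) : ℂ))
      + Complex.I * ((inner ℝ ξ y : ℝ) : ℂ)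
        * (Set.indicator (Metric.ball (0 : Vec d) 1) (fun _ => (1 : ℂ)) y)) * (ν y : ℂ)

/-- ψ(ξ) = −i⟨ξ,b⟩ + ⟨ξ,Aξ⟩ + Φ(ξ). -/
noncomputable def fullSymb (d : ℕ) (b : Vec d) (A : Matrix (Fin d) (Fin d) ℝ) (ν : Vec d → ℝ)
    (ξ : Vec d) : ℂ :=
  -Complex.I * ((inner ℝ ξ b : ℝ) : ℂ) + (quadA A ξ : ℂ) + levyPhi d ν ξ

/-- ψ̃(ξ) = −⟨ξ,b⟩ − ⟨ξ,Aξ⟩ + ∫ (1 − e^{⟨ξ,y⟩} + ⟨ξ,y⟩1_{B(0,1)}(y)) ν(y) dy. -/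
noncomputable def psiTilde (d : ℕ) (b : Vec d) (A : Matrix (Fin d) (Fin d) ℝ) (ν : Vec d → ℝ)
    (ξ : Vec d) : ℝ :=
  -(inner ℝ ξ b : ℝ) - quadA A ξ +
    ∫ y, (1 - Real.exp ((inner ℝ ξ y : ℝ))
      + (inner ℝ ξ y : ℝ) * (Set.indicator (Metric.ball (0 : Vec d) 1) (fun _ => (1 : ℝ)) y)) * ν y

/-- (P_t) is the convolution semigroup with characteristic functions e^{−tψ(ξ)}. -/
def IsCharSemigroup (d : ℕ) (b : Vec d) (A : Matrix (Fin d) (Fin d) ℝ) (ν : Vec d → ℝ)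
    (μ : ℝ → Measure (Vec d)) : Prop :=
  (∀ t : ℝ, 0 < t → IsProbabilityMeasure (μ t)) ∧
  (∀ t : ℝ, 0 < t → ∀ ξ : Vec d,
    (∫ y, Complex.exp (Complex.I * ((inner ℝ ξ y : ℝ) : ℂ)) ∂ μ t)
      = Complex.exp (-(t : ℂ) * fullSymb d b A ν ξ))

/-- ν_r = 1_{B(0,r)^c} ν. -/
noncomputable def nuRestr (d : ℕ) (ν : Vec d → ℝ) (r : ℝ) (y : Vec d) : ℝ :=
  if r ≤ ‖y‖ then ν y else 0

/-- `convPow d g n` is the (n+1)-fold convolution of g with itself, i.e. g^{(n+1)*}. -/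
noncomputable def convPow (d : ℕ) (g : Vec d → ℝ) : ℕ → Vec d → ℝ
  | 0 => g
  | n + 1 => fun x => ∫ z, convPow d g n (x - z) * g z

/-- p̄_t(x) = e^{−t|ν_{h(t)}|} Σ_{n≥1} tⁿ ν_{h(t)}^{n*}(x)/n!. -/
noncomputable def pbar (d : ℕ) (ν : Vec d → ℝ) (t : ℝ) (x : Vec d) : ℝ :=
  Real.exp (-t * ∫ y, nuRestr d ν (hScale d ν t) y) *
    ∑' n : ℕ, t ^ (n + 1) * convPow d (nuRestr d ν (hScale d ν t)) n x / (Nat.factorial (n + 1))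

/-- p̃_t(x) = e^{−t|ν|} Σ_{n≥1} tⁿ ν^{n*}(x)/n!. -/
noncomputable def ptilde (d : ℕ) (ν : Vec d → ℝ) (t : ℝ) (x : Vec d) : ℝ :=
  Real.exp (-t * ∫ y, ν y) *
    ∑' n : ℕ, t ^ (n + 1) * convPow d ν n x / (Nat.factorial (n + 1))

end
/-- Lemma 1 (b). -/
theorem lemma_useful_b (d : ℕ) (hd : 1 ≤ d) (ν : Vec d → ℝ) (f : ℝ → ℝ) (C₀ : ℝ)
    (hν : IsLevyDensity d ν) (hB : AssumptionB d ν f C₀) :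
    ∀ r₀ > 0, ∃ C₆ : ℝ, 1 ≤ C₆ ∧ ∀ s : ℝ, 3 * r₀ ≤ s → f (s - r₀) ≤ C₆ * f s := by
  intro r₀ hr₀
  obtain ⟨R₀, hR₀⟩ : ∃ R₀ : ℝ, ∀ r ≥ R₀, bigK d f r ≤ 1 := by
    have h := hB.K_zero.eventually_lt_const (by norm_num : (0:ℝ≥0∞) < 1)
    rw [Filter.eventually_atTop] at h
    obtain ⟨R₀, h⟩ := h
    exact ⟨R₀, fun r hr => (h r hr).le⟩
  set R : ℝ := max R₀ (max r₀ 1) with hRdef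
  have hRr₀ : r₀ ≤ R := le_trans (le_max_left _ _) (le_max_right _ _)
  have hR1 : (1:ℝ) ≤ R := le_trans (le_max_right _ _) (le_max_right _ _)
  have hKR : bigK d f R ≤ 1 := hR₀ R (le_max_left _ _)
  set S : ℝ := 2*R + 2*r₀ with hSdef
  -- unit vector
  set e : Vec d := EuclideanSpace.single (⟨0, hd⟩ : Fin d) (1:ℝ) with he
  have hne : ‖e‖ = 1 := by
    rw [he, EuclideanSpace.norm_single]; norm_num
  set ρ : ℝ := r₀/2 with hρ
  set c : Vec d := (R + r₀) • e with hc
  have hnc : ‖c‖ = R + r₀ := by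
    rw [hc, norm_smul, hne, mul_one, Real.norm_eq_abs, abs_of_pos (by linarith)]
  set B := Metric.ball c ρ with hBdef
  have hvolpos : 0 < volume B := measure_ball_pos _ _ (by positivity)
  have hvolfin : volume B < ⊤ := measure_ball_lt_top
  set M : ℝ := f (R + 3*r₀/2) with hM
  have hMpos : 0 < M := hB.f_pos _ (by positivity)
  set w : ℝ≥0∞ := ENNReal.ofReal M * volume B with hw
  have hw0 : w ≠ 0 := by
    simp only [hw, ne_eq, mul_eq_zero, not_or]
    exact ⟨by simp [ENNReal.ofReal_eq_zero, not_le, hMpos], hvolpos.ne'⟩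
  have hwt : w ≠ ⊤ := by
    exact ENNReal.mul_ne_top ENNReal.ofReal_ne_top hvolfin.ne
  have hwR : 0 < w.toReal := ENNReal.toReal_pos hw0 hwt
  set Ca : ℝ := (w.toReal)⁻¹ with hCa
  have hfS : 0 < f S := hB.f_pos S (by positivity)
  have hf2r : 0 < f (2*r₀) := hB.f_pos _ (by positivity)
  set Cb : ℝ := f (2*r₀) / f S with hCb
  have hCbpos : 0 < Cb := div_pos hf2r hfS
  refine ⟨max 1 (max Ca Cb), le_max_left _ _, ?_⟩
  intro s hs
  have hspos : 0 < s := by linarith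
  have hfs : 0 < f s := hB.f_pos s hspos
  rcases le_total s S with hsS | hsS
  · -- compact range
    have h1 : f (s - r₀) ≤ f (2*r₀) := hB.f_anti _ _ (by positivity) (by linarith)
    have h2 : f S ≤ f s := hB.f_anti s S hspos hsS
    have h3 : f (s - r₀) ≤ Cb * f s := by
      calc f (s - r₀) ≤ f (2*r₀) := h1
        _ = Cb * f S := by rw [hCb, div_mul_cancel₀ _ hfS.ne']
        _ ≤ Cb * f s := mul_le_mul_of_nonneg_left h2 hCbpos.le
    calc f (s - r₀) ≤ Cb * f s := h3
      _ ≤ max 1 (max Ca Cb) * f s := by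
          have h6 : Cb ≤ max 1 (max Ca Cb) := le_trans (le_max_right _ _) (le_max_right _ _)
          exact mul_le_mul_of_nonneg_right h6 hfs.le
  · -- main range : s ≥ S
    set x : Vec d := s • e with hx
    have hnx : ‖x‖ = s := by
      rw [hx, norm_smul, hne, mul_one, Real.norm_eq_abs, abs_of_pos hspos]
    have hx1 : x ∈ {x : Vec d | 1 < ‖x‖} := by
      simp only [Set.mem_setOf_eq, hnx]; linarith
    have hxc : ‖x - c‖ = s - (R + r₀) := by
      have : x - c = (s - (R + r₀)) • e := by rw [hx, hc, sub_smul]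
      rw [this, norm_smul, hne, mul_one, Real.norm_eq_abs, abs_of_pos (by linarith)]
    have hBsub : B ⊆ {y : Vec d | R < ‖x - y‖ ∧ R < ‖y‖} := by
      intro y hy
      rw [hBdef, Metric.mem_ball, dist_eq_norm] at hy
      constructor
      · have h1 : ‖x - c‖ ≤ ‖x - y‖ + ‖y - c‖ := by
          have := norm_sub_le_norm_sub_add_norm_sub x y c
          linarith [this]
        rw [hxc] at h1; linarith
      · have h1 : ‖c‖ ≤ ‖y‖ + ‖y - c‖ := by
          calc ‖c‖ = ‖y - (y - c)‖ := congrArg Norm.norm (by abel)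
            _ ≤ ‖y‖ + ‖y - c‖ := norm_sub_le _ _
        rw [hnc] at h1; linarith
    have hBpt : ∀ y ∈ B, ‖x - y‖ ≤ s - r₀ ∧ ‖y‖ ≤ R + 3*r₀/2 := by
      intro y hy
      rw [hBdef, Metric.mem_ball, dist_eq_norm] at hy
      constructor
      · have h1 : ‖x - y‖ ≤ ‖x - c‖ + ‖c - y‖ := by
          calc ‖x - y‖ = ‖(x - c) + (c - y)‖ := congrArg Norm.norm (by abel)
            _ ≤ ‖x - c‖ + ‖c - y‖ := norm_add_le _ _
        rw [hxc, norm_sub_rev c y] at h1; linarith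
      · have h1 : ‖y‖ ≤ ‖c‖ + ‖y - c‖ := by
          calc ‖y‖ = ‖c + (y - c)‖ := congrArg Norm.norm (by abel)
            _ ≤ ‖c‖ + ‖y - c‖ := norm_add_le _ _
        rw [hnc] at h1; linarith
    have hfsr : 0 ≤ f (s - r₀) := (hB.f_pos _ (by linarith)).le
    -- the key integral inequality
    have step1 : ENNReal.ofReal (f (s - r₀) * M) * volume B
        ≤ ∫⁻ y in B, ENNReal.ofReal (f ‖x - y‖ * f ‖y‖) := by
      rw [← setLIntegral_const B (ENNReal.ofReal (f (s - r₀) * M))]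
      refine setLIntegral_mono' measurableSet_ball (fun y hy => ?_)
      refine ENNReal.ofReal_le_ofReal ?_
      obtain ⟨hy1, hy2⟩ := hBpt y hy
      obtain ⟨hy3, hy4⟩ := hBsub hy
      have hxy_pos : (0:ℝ) < ‖x - y‖ := by linarith
      have hy_pos : (0:ℝ) < ‖y‖ := by linarith
      have e1 : f (s - r₀) ≤ f ‖x - y‖ := hB.f_anti _ _ hxy_pos hy1
      have e2 : M ≤ f ‖y‖ := hB.f_anti _ _ hy_pos hy2
      have e3 : 0 ≤ f ‖x - y‖ := (hB.f_pos _ hxy_pos).le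
      exact mul_le_mul e1 e2 hMpos.le e3
    have step2 : (∫⁻ y in B, ENNReal.ofReal (f ‖x - y‖ * f ‖y‖))
        ≤ ∫⁻ y in {y : Vec d | R < ‖x - y‖ ∧ R < ‖y‖}, ENNReal.ofReal (f ‖x - y‖ * f ‖y‖) :=
      lintegral_mono_set hBsub
    have step3 : (∫⁻ y in {y : Vec d | R < ‖x - y‖ ∧ R < ‖y‖}, ENNReal.ofReal (f ‖x - y‖ * f ‖y‖))
        ≤ ENNReal.ofReal (f s) := by
      have hle : (∫⁻ y in {y : Vec d | R < ‖x - y‖ ∧ R < ‖y‖},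
          ENNReal.ofReal (f ‖x - y‖ * f ‖y‖)) / ENNReal.ofReal (f ‖x‖) ≤ bigK d f R := by
        exact le_iSup₂ (f := fun (x : Vec d) (_ : x ∈ {x : Vec d | 1 < ‖x‖}) =>
          (∫⁻ y in {y : Vec d | R < ‖x - y‖ ∧ R < ‖y‖},
            ENNReal.ofReal (f ‖x - y‖ * f ‖y‖)) / ENNReal.ofReal (f ‖x‖)) x hx1
      have hfs0 : ENNReal.ofReal (f ‖x‖) ≠ 0 := by
        rw [hnx]; simp [ENNReal.ofReal_eq_zero, not_le, hfs]
      have hfst : ENNReal.ofReal (f ‖x‖) ≠ ⊤ := ENNReal.ofReal_ne_top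
      have := (ENNReal.div_le_iff hfs0 hfst).1 (le_trans hle hKR)
      rwa [one_mul, hnx] at this
    have key : ENNReal.ofReal (f (s - r₀)) * w ≤ ENNReal.ofReal (f s) := by
      calc ENNReal.ofReal (f (s - r₀)) * w
          = ENNReal.ofReal (f (s - r₀) * M) * volume B := by
            rw [hw, ENNReal.ofReal_mul hfsr, mul_assoc]
        _ ≤ _ := le_trans step1 (le_trans step2 step3)
    have h2 : ENNReal.ofReal (f (s - r₀)) ≤ ENNReal.ofReal (f s) / w :=
      (ENNReal.le_div_iff_mul_le (Or.inl hw0) (Or.inl hwt)).2 key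
    have hfin : ENNReal.ofReal (f s) / w ≠ ⊤ := by
      exact (ENNReal.div_lt_top ENNReal.ofReal_ne_top hw0).ne
    have h3 : f (s - r₀) ≤ f s / w.toReal := by
      have h4 := ENNReal.toReal_mono hfin h2
      rwa [ENNReal.toReal_ofReal hfsr, ENNReal.toReal_div, ENNReal.toReal_ofReal hfs.le] at h4
    have h5 : f s / w.toReal = Ca * f s := by
      rw [hCa, div_eq_mul_inv, mul_comm]
    have hCale : Ca ≤ max 1 (max Ca Cb) := le_trans (le_max_left _ _) (le_max_right _ _)
    calc f (s - r₀) ≤ Ca * f s := by rw [← h5]; exact h3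
      _ ≤ max 1 (max Ca Cb) * f s := mul_le_mul_of_nonneg_right hCale hfs.le
end

section
/- Let A be a symmetric positive-definite real d×d matrix (inf_{|ξ|=1} ⟨ξ,Aξ⟩ > 0) and for t > 0 let g_t(x) = (4πt)^{−d/2} (det A)^{−1/2} exp(−⟨x, A^{−1}x⟩/(4t)) be the density of the centered Gaussian measure on ℝ^d whose Fourier transform is ξ ↦ e^{−t⟨ξ,Aξ⟩}. Assume (B). Then for every t₀ > 0 there exist R₀ > 0 and constants C₁₃, C₁₄ > 0 such that g_t(x) ≤ C₁₃ · t · f(|x|) · e^{−C₁₄|x|²} whenever t ∈ (0, t₀] and |x| ≥ R₀. -/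
open MeasureTheory Set Filter Metric Topology
open scoped ENNReal

/-- The Gaussian density with covariance-type matrix A. -/
noncomputable def gaussDens (d : ℕ) (A : Matrix (Fin d) (Fin d) ℝ) (t : ℝ) (x : Vec d) : ℝ :=
  (4 * Real.pi * t) ^ (-(d : ℝ) / 2) * A.det ^ (-(1 : ℝ) / 2) *
    Real.exp (-(quadA A⁻¹ x) / (4 * t))


section AuxLemmas
open scoped Matrix

lemma quadA_smul {d : ℕ} (A : Matrix (Fin d) (Fin d) ℝ) (c : ℝ) (ξ : Vec d) :
    quadA A (c • ξ) = c ^ 2 * quadA A ξ := by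
  simp only [quadA, Finset.mul_sum, PiLp.smul_apply, smul_eq_mul]
  refine Finset.sum_congr rfl fun i _ => Finset.sum_congr rfl fun j _ => by ring

lemma continuous_quadA {d : ℕ} (A : Matrix (Fin d) (Fin d) ℝ) :
    Continuous (quadA A) := by
  unfold quadA
  refine continuous_finset_sum _ fun i _ => continuous_finset_sum _ fun j _ => ?_
  exact (((EuclideanSpace.proj i).continuous.mul continuous_const).mul
    (EuclideanSpace.proj j).continuous)

lemma quadA_eq_dot {d : ℕ} (A : Matrix (Fin d) (Fin d) ℝ) (x : Fin d → ℝ) :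
    quadA A ((WithLp.equiv 2 (Fin d → ℝ)).symm x) = star x ⬝ᵥ A.mulVec x := by
  simp only [quadA, dotProduct, Matrix.mulVec, Finset.mul_sum, star_trivial]
  refine Finset.sum_congr rfl fun i _ => Finset.sum_congr rfl fun j _ => ?_
  simp [dotProduct, WithLp.equiv_symm_apply]; ring

lemma posdef_of_quad {d : ℕ} (A : Matrix (Fin d) (Fin d) ℝ) (hAs : A.IsSymm)
    (hApos : ∃ c > 0, ∀ ξ : Vec d, ‖ξ‖ = 1 → c ≤ quadA A ξ) : A.PosDef := by
  obtain ⟨c, hc, hq⟩ := hApos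
  rw [Matrix.posDef_iff_dotProduct_mulVec]
  constructor
  · ext i j
    simpa [Matrix.conjTranspose_apply] using congrFun (congrFun hAs i) j
  · intro x hx
    set y : Vec d := (WithLp.equiv 2 (Fin d → ℝ)).symm x with hy
    have hx' : y ≠ 0 := by
      simpa [hy] using fun h => hx h
    have hn : (0:ℝ) < ‖y‖ := norm_pos_iff.2 hx'
    have h1 : ‖(‖y‖⁻¹ • y)‖ = 1 := by
      rw [norm_smul]; simp [abs_of_pos (inv_pos.2 hn), inv_mul_cancel₀ hn.ne']
    have h2 := hq _ h1
    rw [quadA_smul] at h2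
    have h3 : quadA A y = star x ⬝ᵥ A.mulVec x := quadA_eq_dot A x
    rw [← h3]
    nlinarith [mul_pos hc (pow_pos hn 2), pow_pos (inv_pos.2 hn) 2, sq_nonneg ‖y‖]

lemma quad_inv_lower {d : ℕ} (hd : 1 ≤ d) (A : Matrix (Fin d) (Fin d) ℝ) (hAs : A.IsSymm)
    (hApos : ∃ c > 0, ∀ ξ : Vec d, ‖ξ‖ = 1 → c ≤ quadA A ξ) :
    ∃ m > 0, ∀ x : Vec d, m * ‖x‖ ^ 2 ≤ quadA A⁻¹ x := by
  have hpd : A.PosDef := posdef_of_quad A hAs hApos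
  have hpdi : A⁻¹.PosDef := hpd.inv
  haveI : Nonempty (Fin d) := ⟨⟨0, hd⟩⟩
  have hS : (Metric.sphere (0 : Vec d) 1).Nonempty :=
    NormedSpace.sphere_nonempty.2 zero_le_one
  obtain ⟨ξ₀, hξ₀S, hmin'⟩ :=
    (isCompact_sphere (0 : Vec d) 1).exists_isMinOn hS (continuous_quadA A⁻¹).continuousOn
  have hmin : ∀ y ∈ Metric.sphere (0 : Vec d) 1, quadA A⁻¹ ξ₀ ≤ quadA A⁻¹ y := hmin'
  have hξ₀ : ‖ξ₀‖ = 1 := by simpa using mem_sphere_zero_iff_norm.1 hξ₀S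
  have hξ₀ne : ξ₀ ≠ 0 := fun h => by simp [h] at hξ₀
  set m := quadA A⁻¹ ξ₀ with hm
  have hmpos : 0 < m := by
    have := hpdi.dotProduct_mulVec_pos (x := WithLp.equiv 2 (Fin d → ℝ) ξ₀)
      (fun h => hξ₀ne (by simpa using congrArg (WithLp.equiv 2 (Fin d → ℝ)).symm h))
    calc (0:ℝ) < _ := this
    _ = m := (quadA_eq_dot A⁻¹ _).symm
  refine ⟨m, hmpos, fun x => ?_⟩
  rcases eq_or_ne x 0 with rfl | hx
  · simp [quadA]
  · have hn : (0:ℝ) < ‖x‖ := norm_pos_iff.2 hx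
    have h1 : ‖(‖x‖⁻¹ • x)‖ = 1 := by
      rw [norm_smul]; simp [abs_of_pos (inv_pos.2 hn), inv_mul_cancel₀ hn.ne']
    have h2 := hmin _ (mem_sphere_zero_iff_norm.2 h1)
    rw [quadA_smul] at h2
    have hinv : ‖x‖⁻¹ ^ 2 * ‖x‖ ^ 2 = 1 := by
      field_simp
    calc m * ‖x‖ ^ 2 ≤ (‖x‖⁻¹ ^ 2 * quadA A⁻¹ x) * ‖x‖ ^ 2 :=
          mul_le_mul_of_nonneg_right h2 (sq_nonneg _)
      _ = quadA A⁻¹ x * (‖x‖⁻¹ ^ 2 * ‖x‖ ^ 2) := by ring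
      _ = quadA A⁻¹ x := by rw [hinv, mul_one]

lemma f_step {d : ℕ} (hd : 1 ≤ d) (f : ℝ → ℝ)
    (f_pos : ∀ s : ℝ, 0 < s → 0 < f s)
    (f_anti : ∀ s t : ℝ, 0 < s → s ≤ t → f t ≤ f s)
    (r₁ : ℝ) (hr₁ : 1 ≤ r₁) (hK : bigK d f r₁ ≤ 1) :
    ∀ s : ℝ, 2 * r₁ + 4 ≤ s →
      (f (r₁ + 3) * f (s - r₁ - 1)) * (volume (Metric.ball (0 : Vec d) 1)).toReal ≤ f s := by
  intro s hs
  haveI : Nonempty (Fin d) := ⟨⟨0, hd⟩⟩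
  set x : Vec d := EuclideanSpace.single (⟨0, hd⟩ : Fin d) s with hxdef
  have hs6 : (6 : ℝ) ≤ s := by linarith
  have hspos : (0 : ℝ) < s := by linarith
  have hxs : ‖x‖ = s := by
    rw [hxdef, EuclideanSpace.norm_single, Real.norm_eq_abs, abs_of_pos hspos]
  have hx1 : x ∈ {x : Vec d | 1 < ‖x‖} := by
    simp only [Set.mem_setOf_eq, hxs]; linarith
  set p : Vec d := x - ((r₁ + 2) / s) • x with hpdef
  have hxp : x - p = ((r₁ + 2) / s) • x := by rw [hpdef]; abel
  have hxpn : ‖x - p‖ = r₁ + 2 := by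
    rw [hxp, norm_smul, hxs, Real.norm_eq_abs,
      abs_of_nonneg (by positivity : (0:ℝ) ≤ (r₁ + 2) / s), div_mul_cancel₀ _ hspos.ne']
  have hpe : p = (1 - (r₁ + 2) / s) • x := by
    rw [hpdef, sub_smul, one_smul]
  have hpn : ‖p‖ = s - (r₁ + 2) := by
    rw [hpe, norm_smul, hxs, Real.norm_eq_abs, abs_of_nonneg, sub_mul, one_mul,
      div_mul_cancel₀ _ hspos.ne']
    rw [sub_nonneg, div_le_one hspos]; linarith
  -- bounds for y in the ball
  have key : ∀ y ∈ Metric.ball p 1,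
      (r₁ + 1 ≤ ‖x - y‖ ∧ ‖x - y‖ ≤ r₁ + 3) ∧ (s - r₁ - 3 ≤ ‖y‖ ∧ ‖y‖ ≤ s - r₁ - 1) := by
    intro y hy
    have hyp : ‖y - p‖ < 1 := by rwa [Metric.mem_ball, dist_eq_norm] at hy
    have e1 : (x - p) - (y - p) = x - y := by abel
    have e2 : (x - p) + (p - y) = x - y := by abel
    have e3 : p - (p - y) = y := by abel
    have l1 : ‖x - p‖ - ‖y - p‖ ≤ ‖x - y‖ := by
      have := norm_sub_norm_le (x - p) (y - p); rw [e1] at this; linarith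
    have l2 : ‖x - y‖ ≤ ‖x - p‖ + ‖p - y‖ := by
      have := norm_add_le (x - p) (p - y); rwa [e2] at this
    have l3 : ‖p‖ - ‖p - y‖ ≤ ‖y‖ := by
      have := norm_sub_norm_le p (p - y); rwa [e3] at this
    have l4 : ‖y‖ ≤ ‖p‖ + ‖y - p‖ := by
      have e4 : p + (y - p) = y := by abel
      have := norm_add_le p (y - p); rwa [e4] at this
    have hpy : ‖p - y‖ = ‖y - p‖ := norm_sub_rev _ _
    rw [hxpn] at l1 l2; rw [hpn] at l3 l4; rw [hpy] at l2 l3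
    exact ⟨⟨by linarith, by linarith⟩, ⟨by linarith, by linarith⟩⟩
  have hsub : Metric.ball p 1 ⊆ {y : Vec d | r₁ < ‖x - y‖ ∧ r₁ < ‖y‖} := by
    intro y hy
    obtain ⟨⟨a1, _⟩, ⟨b1, _⟩⟩ := key y hy
    exact ⟨by linarith, by linarith⟩
  have hbd : ∀ y ∈ Metric.ball p 1,
      ENNReal.ofReal (f (r₁ + 3) * f (s - r₁ - 1)) ≤ ENNReal.ofReal (f ‖x - y‖ * f ‖y‖) := by
    intro y hy
    obtain ⟨⟨a1, a2⟩, ⟨b1, b2⟩⟩ := key y hy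
    have hxy0 : (0:ℝ) < ‖x - y‖ := by linarith
    have hy0 : (0:ℝ) < ‖y‖ := by linarith
    refine ENNReal.ofReal_le_ofReal (mul_le_mul ?_ ?_ ?_ ?_)
    · exact f_anti _ _ hxy0 a2
    · exact f_anti _ _ hy0 b2
    · exact (f_pos _ (by linarith)).le
    · exact (f_pos _ hxy0).le
  -- integral chain
  have h1 : ENNReal.ofReal (f (r₁ + 3) * f (s - r₁ - 1)) * volume (Metric.ball p 1)
      ≤ ∫⁻ y in {y : Vec d | r₁ < ‖x - y‖ ∧ r₁ < ‖y‖},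
          ENNReal.ofReal (f ‖x - y‖ * f ‖y‖) := by
    rw [← setLIntegral_const]
    exact le_trans (setLIntegral_mono' measurableSet_ball hbd)
      (lintegral_mono' (Measure.restrict_mono hsub le_rfl) le_rfl)
  have hfs : (0:ℝ) < f s := f_pos s hspos
  have h2 : (∫⁻ y in {y : Vec d | r₁ < ‖x - y‖ ∧ r₁ < ‖y‖},
      ENNReal.ofReal (f ‖x - y‖ * f ‖y‖)) ≤ ENNReal.ofReal (f ‖x‖) := by
    have hle : (∫⁻ y in {y : Vec d | r₁ < ‖x - y‖ ∧ r₁ < ‖y‖},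
        ENNReal.ofReal (f ‖x - y‖ * f ‖y‖)) / ENNReal.ofReal (f ‖x‖) ≤ bigK d f r₁ :=
      le_iSup₂ (f := fun (x : Vec d) (_ : x ∈ {x : Vec d | 1 < ‖x‖}) =>
        (∫⁻ y in {y : Vec d | r₁ < ‖x - y‖ ∧ r₁ < ‖y‖},
          ENNReal.ofReal (f ‖x - y‖ * f ‖y‖)) / ENNReal.ofReal (f ‖x‖)) x hx1
    have hne0 : ENNReal.ofReal (f ‖x‖) ≠ 0 := by
      rw [hxs]; exact (ENNReal.ofReal_pos.2 hfs).ne'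
    have := (ENNReal.div_le_iff hne0 ENNReal.ofReal_ne_top).1 (le_trans hle hK)
    rwa [one_mul] at this
  rw [hxs] at h2
  have hVt : volume (Metric.ball p 1) ≠ ⊤ := measure_ball_lt_top.ne
  have hVc : volume (Metric.ball p 1) = volume (Metric.ball (0 : Vec d) 1) :=
    MeasureTheory.Measure.addHaar_ball_center _ _ _
  have h3 := le_trans h1 h2
  rw [hVc] at h3
  have hV0t : volume (Metric.ball (0 : Vec d) 1) ≠ ⊤ := measure_ball_lt_top.ne
  have hfnn : (0:ℝ) ≤ f (r₁ + 3) * f (s - r₁ - 1) :=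
    mul_nonneg (f_pos _ (by linarith : (0:ℝ) < r₁ + 3)).le
      (f_pos _ (by linarith : (0:ℝ) < s - r₁ - 1)).le
  rw [← ENNReal.ofReal_toReal hV0t, ← ENNReal.ofReal_mul hfnn] at h3
  exact (ENNReal.ofReal_le_ofReal_iff hfs.le).1 h3

lemma f_exp_lower {d : ℕ} (hd : 1 ≤ d) (f : ℝ → ℝ)
    (f_pos : ∀ s : ℝ, 0 < s → 0 < f s)
    (f_anti : ∀ s t : ℝ, 0 < s → s ≤ t → f t ≤ f s)
    (hK0 : Filter.Tendsto (bigK d f) Filter.atTop (nhds 0)) :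
    ∃ s₀ : ℝ, 6 ≤ s₀ ∧ ∃ c₃ > 0, ∃ β : ℝ,
      ∀ s, s₀ ≤ s → c₃ * Real.exp (-β * s) ≤ f s := by
  obtain ⟨r₁, hKlt, hr₁⟩ :=
    ((hK0.eventually (gt_mem_nhds (zero_lt_one (α := ℝ≥0∞)))).and
      (eventually_ge_atTop (1 : ℝ))).exists
  have hstep0 := f_step hd f f_pos f_anti r₁ hr₁ hKlt.le
  set V0 : ℝ := (volume (Metric.ball (0 : Vec d) 1)).toReal with hV0
  have hV0pos : 0 < V0 :=
    ENNReal.toReal_pos (measure_ball_pos volume 0 one_pos).ne' measure_ball_lt_top.ne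
  set a : ℝ := r₁ + 1 with ha
  set s₀ : ℝ := 2 * r₁ + 4 with hs₀
  have hapos : 0 < a := by rw [ha]; linarith
  set ρ : ℝ := f (r₁ + 3) * V0 with hρdef
  have hρpos : 0 < ρ := mul_pos (f_pos _ (by linarith)) hV0pos
  set ρ₁ : ℝ := min ρ 1 with hρ₁def
  have hρ₁pos : 0 < ρ₁ := lt_min hρpos one_pos
  have hρ₁le : ρ₁ ≤ 1 := min_le_right _ _
  have hstep : ∀ s, s₀ ≤ s → ρ₁ * f (s - a) ≤ f s := by
    intro s hss
    have h1 := hstep0 s hss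
    have hsa : s - a = s - r₁ - 1 := by rw [ha]; ring
    have hfsa : 0 < f (s - a) := f_pos _ (by rw [hsa] at *; rw [hs₀] at hss; linarith)
    calc ρ₁ * f (s - a) ≤ ρ * f (s - a) :=
          mul_le_mul_of_nonneg_right (min_le_left _ _) hfsa.le
      _ = (f (r₁ + 3) * f (s - r₁ - 1)) * V0 := by rw [hρdef, hsa]; ring
      _ ≤ f s := h1
  have claim : ∀ n : ℕ, ∀ s, s₀ ≤ s → s ≤ s₀ + n * a → ρ₁ ^ n * f s₀ ≤ f s := by
    intro n
    induction n with
    | zero =>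
      intro s h1 h2
      have : s = s₀ := le_antisymm (by simpa using h2) h1
      rw [this]; simp
    | succ n ih =>
      intro s h1 h2
      by_cases hc : s ≤ s₀ + n * a
      · have h3 := ih s h1 hc
        have hr : ρ₁ ^ (n + 1) ≤ ρ₁ ^ n :=
          pow_le_pow_of_le_one hρ₁pos.le hρ₁le (Nat.le_succ n)
        have hfs₀ : 0 < f s₀ := f_pos _ (by rw [hs₀]; linarith)
        calc ρ₁ ^ (n+1) * f s₀ ≤ ρ₁ ^ n * f s₀ :=
              mul_le_mul_of_nonneg_right hr hfs₀.le
          _ ≤ f s := h3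
      · push_neg at hc
        have hsa_pos : 0 < s - a := by
          rw [ha]; rw [hs₀] at h1; linarith
        have hn : ρ₁ ^ n * f s₀ ≤ f (s - a) := by
          by_cases hc2 : s - a ≤ s₀
          · have h4 : f s₀ ≤ f (s - a) := f_anti _ _ hsa_pos hc2
            have h5 : ρ₁ ^ n ≤ 1 := pow_le_one₀ hρ₁pos.le hρ₁le
            have hfs₀ : 0 < f s₀ := f_pos _ (by rw [hs₀]; linarith)
            nlinarith
          · push_neg at hc2
            refine ih (s - a) hc2.le ?_
            have : ((n : ℝ) + 1) * a = n * a + a := by ring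
            push_cast at h2
            linarith
        calc ρ₁ ^ (n+1) * f s₀ = ρ₁ * (ρ₁ ^ n * f s₀) := by ring
          _ ≤ ρ₁ * f (s - a) := mul_le_mul_of_nonneg_left hn hρ₁pos.le
          _ ≤ f s := hstep s h1
  -- convert to exponential bound
  set β : ℝ := -(Real.log ρ₁ / a) with hβ
  set c₃ : ℝ := f s₀ * Real.exp (Real.log ρ₁ * (1 - s₀ / a)) with hc₃
  have hfs₀ : 0 < f s₀ := f_pos _ (by rw [hs₀]; linarith)
  have hc₃pos : 0 < c₃ := mul_pos hfs₀ (Real.exp_pos _)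
  refine ⟨s₀, by rw [hs₀]; linarith, c₃, hc₃pos, β, fun s hss => ?_⟩
  set n : ℕ := ⌈(s - s₀) / a⌉₊ with hn
  have hds : 0 ≤ (s - s₀) / a := div_nonneg (by linarith) hapos.le
  have h2 : s ≤ s₀ + n * a := by
    have := Nat.le_ceil ((s - s₀) / a)
    rw [← hn] at this
    have := (div_le_iff₀ hapos).1 this
    linarith
  have hfs := claim n s hss h2
  have hn2 : (n : ℝ) ≤ (s - s₀) / a + 1 := by
    have := Nat.ceil_lt_add_one hds
    rw [← hn] at this
    linarith
  have hrpow : ρ₁ ^ ((s - s₀) / a + 1) ≤ ρ₁ ^ (n : ℕ) := by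
    rw [← Real.rpow_natCast ρ₁ n]
    exact Real.rpow_le_rpow_of_exponent_ge hρ₁pos hρ₁le hn2
  have hexp : Real.log ρ₁ * ((s - s₀) / a + 1)
      = Real.log ρ₁ * (1 - s₀ / a) + (-β) * s := by
    rw [hβ]; field_simp; ring
  have hval : ρ₁ ^ ((s - s₀) / a + 1)
      = Real.exp (Real.log ρ₁ * (1 - s₀ / a)) * Real.exp (-β * s) := by
    rw [Real.rpow_def_of_pos hρ₁pos, hexp, Real.exp_add]
  calc c₃ * Real.exp (-β * s)
      = f s₀ * (Real.exp (Real.log ρ₁ * (1 - s₀ / a)) * Real.exp (-β * s)) := by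
        rw [hc₃]; ring
    _ = f s₀ * ρ₁ ^ ((s - s₀) / a + 1) := by rw [hval]
    _ ≤ f s₀ * ρ₁ ^ (n : ℕ) := mul_le_mul_of_nonneg_left hrpow hfs₀.le
    _ = ρ₁ ^ (n : ℕ) * f s₀ := by ring
    _ ≤ f s := hfs

lemma pow_div_factorial_le_exp {x : ℝ} (hx : 0 ≤ x) (k : ℕ) :
    x ^ k / k.factorial ≤ Real.exp x := by
  refine le_trans ?_ (Real.sum_le_exp_of_nonneg hx (k + 1))
  exact Finset.single_le_sum (f := fun i => x ^ i / i.factorial)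
    (fun i _ => by positivity) (Finset.self_mem_range_succ k)

lemma t_sup_bound (d : ℕ) (b : ℝ) (hb : 0 < b) (t : ℝ) (ht : 0 < t) :
    (4 * Real.pi * t) ^ (-(d : ℝ) / 2) * Real.exp (-(b / t)) ≤
      (4 * Real.pi) ^ (-(d : ℝ) / 2) *
        (1 + (Nat.factorial (d + 1) : ℝ) / b ^ (d + 1)) * t := by
  have hπ : (0 : ℝ) < 4 * Real.pi := by positivity
  set k : ℕ := d + 1 with hk
  have hdn : (0:ℝ) ≤ (d : ℝ) := Nat.cast_nonneg d
  have hsplit : (4 * Real.pi * t) ^ (-(d : ℝ) / 2)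
      = (4 * Real.pi) ^ (-(d : ℝ) / 2) * t ^ (-(d : ℝ) / 2) :=
    Real.mul_rpow hπ.le ht.le
  have hfb : (0:ℝ) ≤ (Nat.factorial k : ℝ) / b ^ k := by positivity
  have hkey : t ^ (-(d : ℝ) / 2 - 1) * Real.exp (-(b / t))
      ≤ 1 + (Nat.factorial k : ℝ) / b ^ k := by
    have hE1 : Real.exp (-(b / t)) ≤ 1 := by
      rw [Real.exp_le_one_iff]
      have : 0 < b / t := div_pos hb ht
      linarith
    rcases le_or_gt 1 t with h1 | h1
    · have h2 : t ^ (-(d : ℝ) / 2 - 1) ≤ 1 :=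
        Real.rpow_le_one_of_one_le_of_nonpos h1 (by linarith)
      nlinarith [Real.exp_pos (-(b/t)), Real.rpow_pos_of_pos ht (-(d:ℝ)/2-1)]
    · have hti : 1 ≤ t⁻¹ := (one_le_inv₀ ht).2 h1.le
      have e1 : t ^ (-(d : ℝ) / 2 - 1) = (t⁻¹) ^ ((d : ℝ) / 2 + 1) := by
        rw [show -(d : ℝ) / 2 - 1 = -((d : ℝ) / 2 + 1) by ring, Real.rpow_neg ht.le,
          ← Real.inv_rpow ht.le]
      have e2 : (t⁻¹) ^ ((d : ℝ) / 2 + 1) ≤ (t⁻¹) ^ ((k : ℝ)) :=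
        Real.rpow_le_rpow_of_exponent_le hti (by rw [hk]; push_cast; linarith)
      have e3 : (t⁻¹) ^ ((k : ℝ)) = t⁻¹ ^ k := Real.rpow_natCast _ _
      have hbt : (0:ℝ) ≤ b / t := (div_pos hb ht).le
      have hp := pow_div_factorial_le_exp hbt k
      have hq : Real.exp (-(b / t)) ≤ ((b / t) ^ k / (Nat.factorial k : ℝ))⁻¹ := by
        rw [Real.exp_neg]
        exact inv_anti₀ (by positivity) hp
      have e4 : t⁻¹ ^ k * ((b / t) ^ k / (Nat.factorial k : ℝ))⁻¹
          = (Nat.factorial k : ℝ) / b ^ k := by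
        rw [div_pow]
        field_simp
        rw [← mul_pow, one_div, inv_mul_cancel₀ ht.ne', one_pow]
      calc t ^ (-(d : ℝ) / 2 - 1) * Real.exp (-(b / t))
          ≤ (t⁻¹) ^ ((k : ℝ)) * ((b / t) ^ k / (Nat.factorial k : ℝ))⁻¹ := by
            rw [e1]
            exact mul_le_mul e2 hq (Real.exp_pos _).le
              (Real.rpow_pos_of_pos (by positivity) _).le
        _ = (Nat.factorial k : ℝ) / b ^ k := by rw [e3, e4]
        _ ≤ 1 + (Nat.factorial k : ℝ) / b ^ k := by linarith
  calc (4 * Real.pi * t) ^ (-(d : ℝ) / 2) * Real.exp (-(b / t))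
      = ((4 * Real.pi) ^ (-(d : ℝ) / 2)) * (t ^ (-(d : ℝ) / 2 - 1) * Real.exp (-(b / t))) * t := by
        rw [hsplit, show -(d : ℝ) / 2 = (-(d : ℝ) / 2 - 1) + 1 by ring, Real.rpow_add ht,
          Real.rpow_one]
        ring
    _ ≤ ((4 * Real.pi) ^ (-(d : ℝ) / 2)) * (1 + (Nat.factorial k : ℝ) / b ^ k) * t := by
        have h4 : (0:ℝ) < (4 * Real.pi) ^ (-(d : ℝ) / 2) := Real.rpow_pos_of_pos hπ _
        exact mul_le_mul_of_nonneg_right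
          (mul_le_mul_of_nonneg_left hkey h4.le) ht.le

end AuxLemmas

set_option maxHeartbeats 1000000

/-- Lemma 3 (a): Gaussian bound against the profile f. -/
theorem lemma_lambda_est_a (d : ℕ) (hd : 1 ≤ d) (A : Matrix (Fin d) (Fin d) ℝ)
    (hAs : A.IsSymm) (hApos : ∃ c > 0, ∀ ξ : Vec d, ‖ξ‖ = 1 → c ≤ quadA A ξ)
    (ν : Vec d → ℝ) (f : ℝ → ℝ) (C₀ : ℝ)
    (hν : IsLevyDensity d ν) (hB : AssumptionB d ν f C₀) :
    ∀ t₀ > 0, ∃ R₀ > 0, ∃ C₁₃ > 0, ∃ C₁₄ > 0, ∀ t ∈ Set.Ioc (0 : ℝ) t₀, ∀ x : Vec d,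
      R₀ ≤ ‖x‖ → gaussDens d A t x ≤ C₁₃ * t * f ‖x‖ * Real.exp (-C₁₄ * ‖x‖ ^ 2) := by
  intro t₀ ht₀
  obtain ⟨m, hmpos, hm⟩ := quad_inv_lower hd A hAs hApos
  have hpd : A.PosDef := posdef_of_quad A hAs hApos
  have hdet : 0 < A.det := hpd.det_pos
  set D : ℝ := A.det ^ (-(1:ℝ)/2) with hD
  have hDpos : 0 < D := Real.rpow_pos_of_pos hdet _
  obtain ⟨s₀, hs₀6, c₃, hc₃, β, hf⟩ :=
    f_exp_lower hd f hB.f_pos hB.f_anti hB.K_zero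
  set C₁₄ : ℝ := m / (16 * t₀) with hC₁₄
  have hC₁₄pos : 0 < C₁₄ := by positivity
  set R₁ : ℝ := 16 * β * t₀ / m with hR₁
  set R₀ : ℝ := max s₀ (max R₁ 1) with hR₀
  have hR₀pos : 0 < R₀ := lt_of_lt_of_le (by norm_num : (0:ℝ) < 1)
    (le_trans (le_max_right R₁ 1) (le_max_right _ _))
  set b : ℝ := m * R₀ ^ 2 / 8 with hb
  have hbpos : 0 < b := by positivity
  set C₅ : ℝ := (4 * Real.pi) ^ (-(d : ℝ) / 2) *
    (1 + (Nat.factorial (d + 1) : ℝ) / b ^ (d + 1)) with hC₅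
  have hC₅pos : 0 < C₅ := by
    apply mul_pos (Real.rpow_pos_of_pos (by positivity) _)
    positivity
  refine ⟨R₀, hR₀pos, D * C₅ / c₃, by positivity, C₁₄, hC₁₄pos, ?_⟩
  rintro t ⟨ht, ht₀'⟩ x hx
  set r : ℝ := ‖x‖ with hr
  have hrR : R₀ ≤ r := hx
  have hr0 : 0 < r := lt_of_lt_of_le hR₀pos hrR
  have hq : m * r ^ 2 ≤ quadA A⁻¹ x := hm x
  -- exponent comparison
  have key2 : b / t + (C₁₄ * r ^ 2 + β * r) ≤ quadA A⁻¹ x / (4 * t) := by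
    have i1 : b / t ≤ m * r ^ 2 / 8 / t := by
      apply div_le_div_of_nonneg_right ?_ ht.le
      · rw [hb]
        nlinarith [mul_le_mul_of_nonneg_left (mul_le_mul hrR hrR hR₀pos.le hr0.le) hmpos.le]
    have i2 : β * r ≤ m * r ^ 2 / (16 * t₀) := by
      rcases le_or_gt β 0 with hβ | hβ
      · have : β * r ≤ 0 := mul_nonpos_of_nonpos_of_nonneg hβ hr0.le
        have : 0 ≤ m * r ^ 2 / (16 * t₀) := by positivity
        linarith
      · have hrR₁ : R₁ ≤ r := le_trans (le_trans (le_max_left R₁ 1) (le_max_right _ _)) hrR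
        have h5 : 16 * β * t₀ ≤ m * r := by
          have h6 : m * R₁ ≤ m * r := mul_le_mul_of_nonneg_left hrR₁ hmpos.le
          have h7 : m * R₁ = 16 * β * t₀ := by
            rw [hR₁]; field_simp
          linarith
        rw [le_div_iff₀ (by positivity)]
        nlinarith [mul_le_mul_of_nonneg_right h5 hr0.le]
    have i3 : C₁₄ * r ^ 2 = m * r ^ 2 / (16 * t₀) := by rw [hC₁₄]; ring
    have i4 : m * r ^ 2 / (8 * t₀) ≤ m * r ^ 2 / (8 * t) := by
      apply div_le_div_of_nonneg_left (by positivity) (by positivity)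
      linarith
    have i5 : C₁₄ * r ^ 2 + β * r ≤ m * r ^ 2 / (8 * t₀) := by
      rw [i3]
      have : m * r ^ 2 / (16 * t₀) + m * r ^ 2 / (16 * t₀) = m * r ^ 2 / (8 * t₀) := by
        ring
      linarith
    have i6 : m * r ^ 2 / (4 * t) ≤ quadA A⁻¹ x / (4 * t) :=
      div_le_div_of_nonneg_right hq (by positivity) |>.trans_eq rfl
    have i7 : m * r ^ 2 / 8 / t + m * r ^ 2 / (8 * t) = m * r ^ 2 / (4 * t) := by
      field_simp; ring
    calc b / t + (C₁₄ * r ^ 2 + β * r)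
        ≤ m * r ^ 2 / 8 / t + m * r ^ 2 / (8 * t₀) := add_le_add i1 i5
      _ ≤ m * r ^ 2 / 8 / t + m * r ^ 2 / (8 * t) := by linarith
      _ = m * r ^ 2 / (4 * t) := i7
      _ ≤ quadA A⁻¹ x / (4 * t) := i6
  have stepA : Real.exp (-(quadA A⁻¹ x) / (4 * t)) ≤
      Real.exp (-(b / t)) * (Real.exp (-β * r) * Real.exp (-C₁₄ * r ^ 2)) := by
    rw [← Real.exp_add, ← Real.exp_add]
    apply Real.exp_le_exp.2
    have : -(quadA A⁻¹ x) / (4 * t) = -(quadA A⁻¹ x / (4 * t)) := by ring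
    rw [this]
    nlinarith [key2]
  have stepT := t_sup_bound d b hbpos t ht
  have hfr : c₃ * Real.exp (-β * r) ≤ f r := hf r (le_trans (le_max_left _ _) hrR)
  have h4πt : 0 < (4 * Real.pi * t) ^ (-(d : ℝ) / 2) :=
    Real.rpow_pos_of_pos (by positivity) _
  have hexps : 0 ≤ Real.exp (-β * r) * Real.exp (-C₁₄ * r ^ 2) := by positivity
  calc gaussDens d A t x
      = ((4 * Real.pi * t) ^ (-(d : ℝ) / 2) * D) * Real.exp (-(quadA A⁻¹ x) / (4 * t)) := rfl
    _ ≤ ((4 * Real.pi * t) ^ (-(d : ℝ) / 2) * D) *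
        (Real.exp (-(b / t)) * (Real.exp (-β * r) * Real.exp (-C₁₄ * r ^ 2))) :=
        mul_le_mul_of_nonneg_left stepA (by positivity)
    _ = D * ((4 * Real.pi * t) ^ (-(d : ℝ) / 2) * Real.exp (-(b / t))) *
        (Real.exp (-β * r) * Real.exp (-C₁₄ * r ^ 2)) := by ring
    _ ≤ D * (C₅ * t) * (Real.exp (-β * r) * Real.exp (-C₁₄ * r ^ 2)) := by
        apply mul_le_mul_of_nonneg_right _ hexps
        exact mul_le_mul_of_nonneg_left stepT hDpos.le
    _ = (D * C₅ / c₃ * c₃) * t * (Real.exp (-β * r) * Real.exp (-C₁₄ * r ^ 2)) := by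
        rw [div_mul_cancel₀ _ hc₃.ne']
        ring
    _ = (D * C₅ / c₃) * t * ((c₃ * Real.exp (-β * r)) * Real.exp (-C₁₄ * r ^ 2)) := by
        ring
    _ ≤ (D * C₅ / c₃) * t * (f r * Real.exp (-C₁₄ * r ^ 2)) := by
        apply mul_le_mul_of_nonneg_left _ (by positivity)
        exact mul_le_mul_of_nonneg_right hfr (Real.exp_pos _).le
    _ = (D * C₅ / c₃) * t * f r * Real.exp (-C₁₄ * r ^ 2) := by ring
end

section
/- Let t₀ > 0, let f : (0,∞) → (0,∞) be nonincreasing, and let ν : ℝ^d \ {0} → (0,∞) be a Lévy density satisfying ν(x) ≍ f(|x|) for x ≠ 0 (i.e. there are constants 0 < c ≤ C with c f(|x|) ≤ ν(x) ≤ C f(|x|)). Suppose p_{t₀} and p_{2t₀} are nonnegative measurable functions with p_{2t₀}(x) = ∫ p_{t₀}(x − y) p_{t₀}(y) dy for all x (the Chapman–Kolmogorov identity for the semigroup densities), and suppose there exist functions η₁, η₂ : S^{d−1} → (0,∞) with 0 < inf η₁ ≤ sup η₁ < ∞ and 0 < inf η₂ ≤ sup η₂ < ∞ such that lim_{r→∞}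 p_{t₀}(rθ)/(t₀ ν(rθ)) = η₁(θ) and lim_{r→∞} p_{2t₀}(rθ)/(2t₀ ν(rθ)) = η₂(θ), both uniformly in θ ∈ S^{d−1}. Then K(r) < ∞ for every r ≥ 1, where K(r) := sup_{|x|>1} (∫_{|x−y|>r, |y|>r} f(|x−y|) f(|y|) dy)/f(|x|). -/
open MeasureTheory Set Filter Metric Topology
open scoped ENNReal

set_option maxHeartbeats 2000000 in
/-- Proposition 1 (c): finiteness of K from two-time asymptotics. -/
theorem converse_c (d : ℕ) (hd : 1 ≤ d) (t₀ : ℝ) (ht₀ : 0 < t₀)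
    (f : ℝ → ℝ) (hf_pos : ∀ s : ℝ, 0 < s → 0 < f s)
    (hf_anti : ∀ s t : ℝ, 0 < s → s ≤ t → f t ≤ f s)
    (ν : Vec d → ℝ) (hν : IsLevyDensity d ν) (hνpos : ∀ x : Vec d, x ≠ 0 → 0 < ν x)
    (c C : ℝ) (hc : 0 < c)
    (hcomp : ∀ x : Vec d, x ≠ 0 → c * f ‖x‖ ≤ ν x ∧ ν x ≤ C * f ‖x‖)
    (p1 p2 : Vec d → ℝ) (hp1m : Measurable p1) (hp2m : Measurable p2)
    (hp1n : ∀ x, 0 ≤ p1 x) (hp2n : ∀ x, 0 ≤ p2 x)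
    (hCK : ∀ x : Vec d, p2 x = ∫ y, p1 (x - y) * p1 y)
    (η₁ η₂ : Vec d → ℝ)
    (hη₁ : ∃ a A' : ℝ, 0 < a ∧ (∀ θ ∈ Metric.sphere (0 : Vec d) 1, a ≤ η₁ θ ∧ η₁ θ ≤ A'))
    (hη₂ : ∃ a A' : ℝ, 0 < a ∧ (∀ θ ∈ Metric.sphere (0 : Vec d) 1, a ≤ η₂ θ ∧ η₂ θ ≤ A'))
    (hlim1 : ∀ ε > 0, ∃ R : ℝ, ∀ r ≥ R, ∀ θ ∈ Metric.sphere (0 : Vec d) 1,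
      |p1 (r • θ) / (t₀ * ν (r • θ)) - η₁ θ| < ε)
    (hlim2 : ∀ ε > 0, ∃ R : ℝ, ∀ r ≥ R, ∀ θ ∈ Metric.sphere (0 : Vec d) 1,
      |p2 (r • θ) / (2 * t₀ * ν (r • θ)) - η₂ θ| < ε) :
    ∀ r : ℝ, 1 ≤ r → bigK d f r < ⊤ := by
  classical
  obtain ⟨a₁, A₁, ha₁, hηb₁⟩ := hη₁
  obtain ⟨a₂, A₂, ha₂, hηb₂⟩ := hη₂
  -- a distinguished unit vector
  set e : Vec d := EuclideanSpace.single (⟨0, hd⟩ : Fin d) (1:ℝ) with he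
  have hnorme : ‖e‖ = 1 := by rw [he, EuclideanSpace.norm_single]; norm_num
  have hene : e ≠ 0 := by
    intro h; rw [h, norm_zero] at hnorme; norm_num at hnorme
  have heS : e ∈ Metric.sphere (0 : Vec d) 1 := by
    simp [mem_sphere_zero_iff_norm, hnorme]
  have hf1 : 0 < f 1 := hf_pos 1 one_pos
  -- C is positive
  have hC : 0 < C := by
    have h1 := (hcomp e hene).2
    have h2 := hνpos e hene
    have h3 : 0 < f ‖e‖ := hf_pos _ (by rw [hnorme]; norm_num)
    nlinarith
  have hA₂ : a₂ ≤ A₂ := le_trans (hηb₂ e heS).1 (hηb₂ e heS).2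
  -- lower bound for p1 at infinity
  obtain ⟨R₁, hR₁⟩ := hlim1 (a₁/2) (by positivity)
  set R₁' : ℝ := max R₁ 1 with hR₁'def
  have hR₁'1 : (1:ℝ) ≤ R₁' := le_max_right _ _
  set κ₁ : ℝ := a₁/2 * t₀ * c with hκ₁def
  have hκ₁ : 0 < κ₁ := by positivity
  have hp1low : ∀ z : Vec d, R₁' ≤ ‖z‖ → κ₁ * f ‖z‖ ≤ p1 z := by
    intro z hz
    have hz0 : z ≠ 0 := by
      intro h; rw [h, norm_zero] at hz; linarith
    have hθ : (‖z‖⁻¹ • z) ∈ Metric.sphere (0 : Vec d) 1 := by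
      simpa [mem_sphere_zero_iff_norm] using norm_smul_inv_norm (𝕜 := ℝ) hz0
    have hzz : ‖z‖ • ((‖z‖:ℝ)⁻¹ • z) = z := by
      rw [smul_smul, mul_inv_cancel₀ (norm_ne_zero_iff.2 hz0), one_smul]
    have hab := hR₁ ‖z‖ (le_trans (le_max_left _ _) hz) _ hθ
    rw [hzz] at hab
    have hν1 : 0 < ν z := hνpos z hz0
    have hden : 0 < t₀ * ν z := by positivity
    have h4 : a₁ ≤ η₁ (‖z‖⁻¹ • z) := (hηb₁ _ hθ).1
    have h5 : a₁/2 < p1 z / (t₀ * ν z) := by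
      have := abs_lt.1 hab
      linarith [this.1]
    have h6 : a₁/2 * (t₀ * ν z) < p1 z := (lt_div_iff₀ hden).1 h5
    have h7 : c * f ‖z‖ ≤ ν z := (hcomp z hz0).1
    nlinarith [hf_pos ‖z‖ (by linarith : (0:ℝ) < ‖z‖)]
  -- two-sided bounds for p2 at infinity
  obtain ⟨R₂, hR₂⟩ := hlim2 (a₂/2) (by positivity)
  set R₂' : ℝ := max R₂ 1 with hR₂'def
  have hR₂'1 : (1:ℝ) ≤ R₂' := le_max_right _ _
  set κ₂ : ℝ := (A₂ + a₂) * (2 * t₀) * C with hκ₂def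
  have hκ₂ : 0 < κ₂ := by
    rw [hκ₂def]; exact mul_pos (mul_pos (by linarith) (by linarith)) hC
  have hp2bd : ∀ z : Vec d, R₂' ≤ ‖z‖ → 0 < p2 z ∧ p2 z ≤ κ₂ * f ‖z‖ := by
    intro z hz
    have hz0 : z ≠ 0 := by
      intro h; rw [h, norm_zero] at hz; linarith
    have hθ : (‖z‖⁻¹ • z) ∈ Metric.sphere (0 : Vec d) 1 := by
      simpa [mem_sphere_zero_iff_norm] using norm_smul_inv_norm (𝕜 := ℝ) hz0
    have hzz : ‖z‖ • ((‖z‖:ℝ)⁻¹ • z) = z := by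
      rw [smul_smul, mul_inv_cancel₀ (norm_ne_zero_iff.2 hz0), one_smul]
    have hab := hR₂ ‖z‖ (le_trans (le_max_left _ _) hz) _ hθ
    rw [hzz] at hab
    have hν1 : 0 < ν z := hνpos z hz0
    have hden : 0 < 2 * t₀ * ν z := by positivity
    have h4 : a₂ ≤ η₂ (‖z‖⁻¹ • z) := (hηb₂ _ hθ).1
    have h4' : η₂ (‖z‖⁻¹ • z) ≤ A₂ := (hηb₂ _ hθ).2
    have habs := abs_lt.1 hab
    constructor
    · have h5 : a₂/2 < p2 z / (2 * t₀ * ν z) := by linarith [habs.1]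
      have h6 : a₂/2 * (2 * t₀ * ν z) < p2 z := (lt_div_iff₀ hden).1 h5
      nlinarith
    · have h5 : p2 z / (2 * t₀ * ν z) < A₂ + a₂ := by linarith [habs.2]
      have h6 : p2 z < (A₂ + a₂) * (2 * t₀ * ν z) := (div_lt_iff₀ hden).1 h5
      have h7 : ν z ≤ C * f ‖z‖ := (hcomp z hz0).2
      nlinarith
  -- now fix r
  intro r hr
  have hr0 : (0:ℝ) < r := by linarith
  set r₁ : ℝ := max r R₁' with hr₁def
  have hr₁R : R₁' ≤ r₁ := le_max_right _ _
  have hr₁r : r ≤ r₁ := le_max_left _ _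
  have hr₁1 : (1:ℝ) ≤ r₁ := le_trans hR₁'1 hr₁R
  -- the reference ball
  set U : Set (Vec d) := Metric.closedBall ((r₁+1) • e) 1 with hUdef
  set V : ℝ := (volume U).toReal with hVdef
  have hVfin : volume U ≠ ⊤ := measure_closedBall_lt_top.ne
  have hV : 0 < V := by
    apply ENNReal.toReal_pos _ hVfin
    refine (lt_of_lt_of_le (Metric.measure_ball_pos volume _ one_pos)
      (measure_mono Metric.ball_subset_closedBall)).ne'
  have hfr12 : 0 < f (r₁ + 2) := hf_pos _ (by linarith)
  set U₀ : ℝ := max (R₁' + 2) R₂' with hU₀def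
  set Λ : ℝ := κ₂ / (κ₁^2 * f (r₁+2) * V) with hΛdef
  have hΛ : 0 < Λ := by positivity
  -- growth lemma
  have grow : ∀ u : ℝ, U₀ ≤ u → f u ≤ Λ * f (u + r₁) := by
    intro u hu
    have huR2 : R₂' ≤ u := le_trans (le_max_right _ _) hu
    have huR1 : R₁' + 2 ≤ u := le_trans (le_max_left _ _) hu
    have hu3 : (3:ℝ) ≤ u := by linarith
    set x' : Vec d := (u + r₁) • e with hx'def
    have hnx' : ‖x'‖ = u + r₁ := by
      rw [hx'def, norm_smul, hnorme, mul_one, Real.norm_eq_abs, abs_of_pos (by linarith)]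
    have hx'R2 : R₂' ≤ ‖x'‖ := by rw [hnx']; linarith
    obtain ⟨hp2pos, hp2up⟩ := hp2bd x' hx'R2
    have hCK' : p2 x' = ∫ y, p1 (x' - y) * p1 y := hCK x'
    have hgi : Integrable (fun y => p1 (x' - y) * p1 y) := by
      by_contra hni
      rw [hCK', integral_undef hni] at hp2pos
      exact lt_irrefl _ hp2pos
    have hgnn : ∀ y, 0 ≤ p1 (x' - y) * p1 y := fun y => mul_nonneg (hp1n _) (hp1n _)
    have hb : ‖(r₁+1) • e‖ = r₁ + 1 := by
      rw [norm_smul, hnorme, mul_one, Real.norm_eq_abs, abs_of_pos (by linarith)]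
    have hUbd : ∀ y ∈ U, κ₁ * f u * (κ₁ * f (r₁ + 2)) ≤ p1 (x' - y) * p1 y := by
      intro y hy
      rw [hUdef, Metric.mem_closedBall, dist_eq_norm] at hy
      have hny1 : r₁ ≤ ‖y‖ := by
        have h1 : ‖(r₁+1) • e‖ - ‖y‖ ≤ ‖y - (r₁+1) • e‖ := by
          rw [norm_sub_rev]; exact norm_sub_norm_le _ _
        rw [hb] at h1; linarith
      have hny2 : ‖y‖ ≤ r₁ + 2 := by
        have h1 : ‖y‖ - ‖(r₁+1) • e‖ ≤ ‖y - (r₁+1) • e‖ := norm_sub_norm_le _ _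
        rw [hb] at h1; linarith
      have hxy : x' - y = (u - 1) • e - (y - (r₁+1) • e) := by
        rw [hx'def]; module
      have hue : ‖(u - 1) • e‖ = u - 1 := by
        rw [norm_smul, hnorme, mul_one, Real.norm_eq_abs, abs_of_pos (by linarith)]
      have hxy1 : u - 2 ≤ ‖x' - y‖ := by
        have h1 : ‖(u-1) • e‖ - ‖y - (r₁+1) • e‖ ≤ ‖(u - 1) • e - (y - (r₁+1) • e)‖ :=
          norm_sub_norm_le _ _
        rw [hue] at h1; rw [hxy]; linarith
      have hxy2 : ‖x' - y‖ ≤ u := by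
        have h1 : ‖(u - 1) • e - (y - (r₁+1) • e)‖ ≤ ‖(u-1) • e‖ + ‖y - (r₁+1) • e‖ :=
          norm_sub_le _ _
        rw [hue] at h1; rw [hxy]; linarith
      have l1 : κ₁ * f ‖x' - y‖ ≤ p1 (x' - y) := hp1low _ (by linarith)
      have l2 : κ₁ * f ‖y‖ ≤ p1 y := hp1low _ (by linarith)
      have l3 : f u ≤ f ‖x' - y‖ := hf_anti _ _ (by linarith) hxy2
      have l4 : f (r₁ + 2) ≤ f ‖y‖ := hf_anti _ _ (by linarith) hny2
      have m1 : κ₁ * f u ≤ p1 (x' - y) :=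
        le_trans (mul_le_mul_of_nonneg_left l3 hκ₁.le) l1
      have m2 : κ₁ * f (r₁ + 2) ≤ p1 y :=
        le_trans (mul_le_mul_of_nonneg_left l4 hκ₁.le) l2
      exact mul_le_mul m1 m2 (by positivity) (hp1n _)
    have hlow := setIntegral_ge_of_const_le (μ := volume) measurableSet_closedBall hVfin
      hUbd hgi.integrableOn
    have hle := setIntegral_le_integral (s := U) hgi (Filter.Eventually.of_forall hgnn)
    have key : κ₁ * f u * (κ₁ * f (r₁+2)) * V ≤ κ₂ * f (u + r₁) := by
      have h1 : κ₁ * f u * (κ₁ * f (r₁+2)) * V ≤ p2 x' := by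
        rw [hCK']
        exact le_trans (by rw [smul_eq_mul, mul_comm] at hlow; exact hlow) hle
      rw [hnx'] at hp2up
      linarith
    rw [hΛdef, div_mul_eq_mul_div, le_div_iff₀ (by positivity)]
    nlinarith [key]
  -- the global integrability constant
  set M : ℝ≥0∞ := ∫⁻ y in {y : Vec d | r < ‖y‖}, ENNReal.ofReal (f ‖y‖) with hMdef
  have hsetm : MeasurableSet {y : Vec d | r < ‖y‖} :=
    measurableSet_lt measurable_const measurable_norm
  have hM : M < ⊤ := by
    have hsub : ∀ y ∈ {y : Vec d | r < ‖y‖},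
        ENNReal.ofReal (f ‖y‖) ≤
          ENNReal.ofReal c⁻¹ * ENNReal.ofReal (min 1 (‖y‖^2) * ν y) := by
      intro y hy
      have hy1 : 1 < ‖y‖ := lt_of_le_of_lt hr hy
      have hy0 : y ≠ 0 := by
        intro h; rw [h, norm_zero] at hy1; linarith
      have hmin : min 1 (‖y‖^2) = (1:ℝ) := min_eq_left (by nlinarith)
      rw [← ENNReal.ofReal_mul (by positivity)]
      apply ENNReal.ofReal_le_ofReal
      rw [hmin, one_mul]
      have h7 := (hcomp y hy0).1
      rw [inv_mul_eq_div, le_div_iff₀ hc]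
      nlinarith [hf_pos ‖y‖ (by linarith : (0:ℝ) < ‖y‖)]
    calc M ≤ ∫⁻ y in {y : Vec d | r < ‖y‖},
          ENNReal.ofReal c⁻¹ * ENNReal.ofReal (min 1 (‖y‖^2) * ν y) :=
        setLIntegral_mono' hsetm hsub
      _ ≤ ∫⁻ y, ENNReal.ofReal c⁻¹ * ENNReal.ofReal (min 1 (‖y‖^2) * ν y) :=
        setLIntegral_le_lintegral _ _
      _ = ENNReal.ofReal c⁻¹ * ∫⁻ y, ENNReal.ofReal (min 1 (‖y‖^2) * ν y) :=
        lintegral_const_mul' _ _ ENNReal.ofReal_ne_top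
      _ < ⊤ := by
        refine ENNReal.mul_lt_top ENNReal.ofReal_lt_top ?_
        calc ∫⁻ y, ENNReal.ofReal (min 1 (‖y‖^2) * ν y)
            ≤ ∫⁻ y, (‖min 1 (‖y‖^2) * ν y‖₊ : ℝ≥0∞) :=
              lintegral_mono fun y => Real.ofReal_le_enorm _
          _ < ⊤ := hν.integ.2
  set R₀ : ℝ := max (U₀ + r₁) R₂' with hR₀def
  have hR₀pos : (0:ℝ) < R₀ := lt_of_lt_of_le (by linarith) (le_max_right _ _)
  set N₁ : ℝ≥0∞ := ENNReal.ofReal (f r) * M / ENNReal.ofReal (f R₀) with hN₁def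
  set N₂ : ℝ≥0∞ := ENNReal.ofReal (κ₁⁻¹ * κ₁⁻¹ * κ₂) +
      2 * (ENNReal.ofReal (f r * Λ) * volume (Metric.closedBall (0 : Vec d) r₁)) with hN₂def
  have hN₁fin : N₁ < ⊤ := by
    rw [hN₁def]
    exact ENNReal.div_lt_top (ENNReal.mul_lt_top ENNReal.ofReal_lt_top hM).ne
      (ENNReal.ofReal_pos.mpr (hf_pos R₀ hR₀pos)).ne'
  have hN₂fin : N₂ < ⊤ := by
    rw [hN₂def]
    refine ENNReal.add_lt_top.2 ⟨ENNReal.ofReal_lt_top, ?_⟩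
    exact ENNReal.mul_lt_top (by simp)
      (ENNReal.mul_lt_top ENNReal.ofReal_lt_top measure_closedBall_lt_top)
  have hU₀3 : (3:ℝ) ≤ U₀ := le_trans (by linarith) (le_max_left _ _)
  have hbound : ∀ x : Vec d, 1 < ‖x‖ →
      (∫⁻ y in {y : Vec d | r < ‖x - y‖ ∧ r < ‖y‖}, ENNReal.ofReal (f ‖x - y‖ * f ‖y‖)) /
        ENNReal.ofReal (f ‖x‖) ≤ N₁ + N₂ := by
    intro x hx
    have hDm : MeasurableSet {y : Vec d | r < ‖x - y‖ ∧ r < ‖y‖} :=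
      (measurableSet_lt measurable_const ((measurable_const.sub measurable_id).norm)).inter
        (measurableSet_lt measurable_const measurable_norm)
    by_cases hxR : ‖x‖ ≤ R₀
    · -- small x
      have step : (∫⁻ y in {y : Vec d | r < ‖x - y‖ ∧ r < ‖y‖},
          ENNReal.ofReal (f ‖x - y‖ * f ‖y‖)) ≤ ENNReal.ofReal (f r) * M := by
        calc (∫⁻ y in {y : Vec d | r < ‖x - y‖ ∧ r < ‖y‖}, ENNReal.ofReal (f ‖x - y‖ * f ‖y‖))
            ≤ ∫⁻ y in {y : Vec d | r < ‖x - y‖ ∧ r < ‖y‖},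
              ENNReal.ofReal (f r) * ENNReal.ofReal (f ‖y‖) := by
              apply setLIntegral_mono' hDm
              intro y hy
              rw [← ENNReal.ofReal_mul (hf_pos r hr0).le]
              apply ENNReal.ofReal_le_ofReal
              have h1 : f ‖x - y‖ ≤ f r := hf_anti r _ hr0 hy.1.le
              have h2 : 0 ≤ f ‖y‖ := (hf_pos _ (lt_trans hr0 hy.2)).le
              exact mul_le_mul_of_nonneg_right h1 h2
          _ ≤ ∫⁻ y in {y : Vec d | r < ‖y‖}, ENNReal.ofReal (f r) * ENNReal.ofReal (f ‖y‖) :=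
            lintegral_mono' (Measure.restrict_mono (fun y hy => hy.2) le_rfl) le_rfl
          _ = ENNReal.ofReal (f r) * M := lintegral_const_mul' _ _ ENNReal.ofReal_ne_top
      refine le_trans (ENNReal.div_le_div step
        (ENNReal.ofReal_le_ofReal (hf_anti ‖x‖ R₀ (by linarith) hxR))) ?_
      rw [← hN₁def]
      exact le_self_add
    · push_neg at hxR
      have hxR2 : R₂' ≤ ‖x‖ := le_trans (le_max_right _ _) hxR.le
      have hxU : U₀ + r₁ ≤ ‖x‖ := le_trans (le_max_left _ _) hxR.le
      obtain ⟨hp2posx, hp2upx⟩ := hp2bd x hxR2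
      have hgi : Integrable (fun y => p1 (x - y) * p1 y) := by
        by_contra hni
        rw [hCK x, integral_undef hni] at hp2posx
        exact lt_irrefl _ hp2posx
      have hgnn : ∀ y, 0 ≤ p1 (x - y) * p1 y := fun y => mul_nonneg (hp1n _) (hp1n _)
      have hlint : (∫⁻ y, ENNReal.ofReal (p1 (x - y) * p1 y)) = ENNReal.ofReal (p2 x) := by
        rw [← ofReal_integral_eq_lintegral_ofReal hgi (Filter.Eventually.of_forall hgnn), ← hCK x]
      have hxr₁ : 0 < ‖x‖ - r₁ := by linarith
      have hgrow : f (‖x‖ - r₁) ≤ Λ * f ‖x‖ := by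
        have h := grow (‖x‖ - r₁) (by linarith)
        rwa [sub_add_cancel] at h
      have hfx' : 0 ≤ f ‖x‖ := (hf_pos _ (by linarith)).le
      set Aset := {y : Vec d | r₁ < ‖x - y‖ ∧ r₁ < ‖y‖} with hAdef
      set Bset := {y : Vec d | (r < ‖x - y‖ ∧ r < ‖y‖) ∧ ‖y‖ ≤ r₁} with hBdef
      set B'set := {y : Vec d | (r < ‖x - y‖ ∧ r < ‖y‖) ∧ ‖x - y‖ ≤ r₁} with hB'def
      have hsplit : {y : Vec d | r < ‖x - y‖ ∧ r < ‖y‖} ⊆ Aset ∪ Bset ∪ B'set := by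
        intro y hy
        by_cases h1 : ‖y‖ ≤ r₁
        · exact Or.inl (Or.inr ⟨hy, h1⟩)
        · by_cases h2 : ‖x - y‖ ≤ r₁
          · exact Or.inr ⟨hy, h2⟩
          · exact Or.inl (Or.inl ⟨lt_of_not_ge h2, lt_of_not_ge h1⟩)
      have hmAset : MeasurableSet Aset :=
        (measurableSet_lt measurable_const ((measurable_const.sub measurable_id).norm)).inter
          (measurableSet_lt measurable_const measurable_norm)
      have hmBset : MeasurableSet Bset :=
        ((measurableSet_lt measurable_const ((measurable_const.sub measurable_id).norm)).inter
          (measurableSet_lt measurable_const measurable_norm)).inter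
          (measurableSet_le measurable_norm measurable_const)
      have hmB'set : MeasurableSet B'set :=
        ((measurableSet_lt measurable_const ((measurable_const.sub measurable_id).norm)).inter
          (measurableSet_lt measurable_const measurable_norm)).inter
          (measurableSet_le ((measurable_const.sub measurable_id).norm) measurable_const)
      have hA : (∫⁻ y in Aset, ENNReal.ofReal (f ‖x - y‖ * f ‖y‖))
          ≤ ENNReal.ofReal (κ₁⁻¹ * κ₁⁻¹ * κ₂) * ENNReal.ofReal (f ‖x‖) := by
        have hpt : ∀ y ∈ Aset, ENNReal.ofReal (f ‖x - y‖ * f ‖y‖)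
            ≤ ENNReal.ofReal (κ₁⁻¹ * κ₁⁻¹) * ENNReal.ofReal (p1 (x - y) * p1 y) := by
          intro y hy
          obtain ⟨hy1, hy2⟩ := hy
          have l1 : κ₁ * f ‖x - y‖ ≤ p1 (x - y) := hp1low _ (le_trans hr₁R hy1.le)
          have l2 : κ₁ * f ‖y‖ ≤ p1 y := hp1low _ (le_trans hr₁R hy2.le)
          have hfx : 0 ≤ f ‖x - y‖ := (hf_pos _ (by linarith : (0:ℝ) < ‖x - y‖)).le
          have hfy : 0 ≤ f ‖y‖ := (hf_pos _ (by linarith : (0:ℝ) < ‖y‖)).le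
          rw [← ENNReal.ofReal_mul (by positivity : (0:ℝ) ≤ κ₁⁻¹ * κ₁⁻¹)]
          apply ENNReal.ofReal_le_ofReal
          have m1 : f ‖x - y‖ ≤ κ₁⁻¹ * p1 (x - y) := by
            rw [inv_mul_eq_div, le_div_iff₀ hκ₁]; linarith
          have m2 : f ‖y‖ ≤ κ₁⁻¹ * p1 y := by
            rw [inv_mul_eq_div, le_div_iff₀ hκ₁]; linarith
          calc f ‖x - y‖ * f ‖y‖ ≤ (κ₁⁻¹ * p1 (x - y)) * (κ₁⁻¹ * p1 y) :=
              mul_le_mul m1 m2 hfy (mul_nonneg (inv_nonneg.2 hκ₁.le) (hp1n _))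
            _ = κ₁⁻¹ * κ₁⁻¹ * (p1 (x - y) * p1 y) := by ring
        calc (∫⁻ y in Aset, ENNReal.ofReal (f ‖x - y‖ * f ‖y‖))
            ≤ ∫⁻ y in Aset, ENNReal.ofReal (κ₁⁻¹ * κ₁⁻¹) * ENNReal.ofReal (p1 (x - y) * p1 y) :=
            setLIntegral_mono' hmAset hpt
          _ ≤ ∫⁻ y, ENNReal.ofReal (κ₁⁻¹ * κ₁⁻¹) * ENNReal.ofReal (p1 (x - y) * p1 y) :=
            setLIntegral_le_lintegral _ _
          _ = ENNReal.ofReal (κ₁⁻¹ * κ₁⁻¹) * ENNReal.ofReal (p2 x) := by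
            rw [lintegral_const_mul' _ _ ENNReal.ofReal_ne_top, hlint]
          _ ≤ ENNReal.ofReal (κ₁⁻¹ * κ₁⁻¹) * ENNReal.ofReal (κ₂ * f ‖x‖) :=
            mul_le_mul_right (ENNReal.ofReal_le_ofReal hp2upx) _
          _ = ENNReal.ofReal (κ₁⁻¹ * κ₁⁻¹ * κ₂) * ENNReal.ofReal (f ‖x‖) := by
            rw [← ENNReal.ofReal_mul (by positivity : (0:ℝ) ≤ κ₁⁻¹ * κ₁⁻¹),
              ← ENNReal.ofReal_mul (by positivity : (0:ℝ) ≤ κ₁⁻¹ * κ₁⁻¹ * κ₂)]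
            congr 1
            ring
      have hB : (∫⁻ y in Bset, ENNReal.ofReal (f ‖x - y‖ * f ‖y‖))
          ≤ ENNReal.ofReal (f r * Λ) * volume (Metric.closedBall (0 : Vec d) r₁) *
            ENNReal.ofReal (f ‖x‖) := by
        have hpt : ∀ y ∈ Bset, ENNReal.ofReal (f ‖x - y‖ * f ‖y‖)
            ≤ ENNReal.ofReal (f r * Λ) * ENNReal.ofReal (f ‖x‖) := by
          intro y hy
          obtain ⟨⟨hy1, hy2⟩, hy3⟩ := hy
          have hnxy : ‖x‖ - r₁ ≤ ‖x - y‖ := by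
            have h := norm_sub_norm_le x y
            linarith
          have h2 : f ‖x - y‖ ≤ Λ * f ‖x‖ := le_trans (hf_anti _ _ hxr₁ hnxy) hgrow
          have h3 : f ‖y‖ ≤ f r := hf_anti r _ hr0 hy2.le
          have hfy : 0 ≤ f ‖y‖ := (hf_pos _ (lt_trans hr0 hy2)).le
          rw [← ENNReal.ofReal_mul (mul_nonneg (hf_pos r hr0).le hΛ.le)]
          apply ENNReal.ofReal_le_ofReal
          calc f ‖x - y‖ * f ‖y‖ ≤ (Λ * f ‖x‖) * f r :=
              mul_le_mul h2 h3 hfy (mul_nonneg hΛ.le hfx')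
            _ = f r * Λ * f ‖x‖ := by ring
        calc (∫⁻ y in Bset, ENNReal.ofReal (f ‖x - y‖ * f ‖y‖))
            ≤ ∫⁻ _y in Bset, ENNReal.ofReal (f r * Λ) * ENNReal.ofReal (f ‖x‖) :=
            setLIntegral_mono' hmBset hpt
          _ = ENNReal.ofReal (f r * Λ) * ENNReal.ofReal (f ‖x‖) * volume Bset :=
            setLIntegral_const _ _
          _ ≤ ENNReal.ofReal (f r * Λ) * ENNReal.ofReal (f ‖x‖) *
              volume (Metric.closedBall (0 : Vec d) r₁) := by
            refine mul_le_mul_right (measure_mono ?_) _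
            intro y hy
            rw [Metric.mem_closedBall, dist_zero_right]
            exact hy.2
          _ = ENNReal.ofReal (f r * Λ) * volume (Metric.closedBall (0 : Vec d) r₁) *
              ENNReal.ofReal (f ‖x‖) := by ring
      have hB' : (∫⁻ y in B'set, ENNReal.ofReal (f ‖x - y‖ * f ‖y‖))
          ≤ ENNReal.ofReal (f r * Λ) * volume (Metric.closedBall (0 : Vec d) r₁) *
            ENNReal.ofReal (f ‖x‖) := by
        have hpt : ∀ y ∈ B'set, ENNReal.ofReal (f ‖x - y‖ * f ‖y‖)
            ≤ ENNReal.ofReal (f r * Λ) * ENNReal.ofReal (f ‖x‖) := by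
          intro y hy
          obtain ⟨⟨hy1, hy2⟩, hy3⟩ := hy
          have hny : ‖x‖ - r₁ ≤ ‖y‖ := by
            have h := norm_add_le (x - y) y
            rw [sub_add_cancel] at h
            linarith
          have h2 : f ‖y‖ ≤ Λ * f ‖x‖ := le_trans (hf_anti _ _ hxr₁ hny) hgrow
          have h3 : f ‖x - y‖ ≤ f r := hf_anti r _ hr0 hy1.le
          have hfxy : 0 ≤ f ‖x - y‖ := (hf_pos _ (lt_trans hr0 hy1)).le
          rw [← ENNReal.ofReal_mul (mul_nonneg (hf_pos r hr0).le hΛ.le)]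
          apply ENNReal.ofReal_le_ofReal
          calc f ‖x - y‖ * f ‖y‖ ≤ f r * (Λ * f ‖x‖) :=
              mul_le_mul h3 h2 ((hf_pos _ (lt_trans hr0 hy2)).le) ((hf_pos r hr0).le)
            _ = f r * Λ * f ‖x‖ := by ring
        calc (∫⁻ y in B'set, ENNReal.ofReal (f ‖x - y‖ * f ‖y‖))
            ≤ ∫⁻ _y in B'set, ENNReal.ofReal (f r * Λ) * ENNReal.ofReal (f ‖x‖) :=
            setLIntegral_mono' hmB'set hpt
          _ = ENNReal.ofReal (f r * Λ) * ENNReal.ofReal (f ‖x‖) * volume B'set :=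
            setLIntegral_const _ _
          _ ≤ ENNReal.ofReal (f r * Λ) * ENNReal.ofReal (f ‖x‖) *
              volume (Metric.closedBall x r₁) := by
            refine mul_le_mul_right (measure_mono ?_) _
            intro y hy
            rw [Metric.mem_closedBall, dist_eq_norm, norm_sub_rev]
            exact hy.2
          _ = ENNReal.ofReal (f r * Λ) * volume (Metric.closedBall (0 : Vec d) r₁) *
              ENNReal.ofReal (f ‖x‖) := by
            rw [Measure.addHaar_closedBall volume x (by linarith : (0:ℝ) ≤ r₁),
              Measure.addHaar_closedBall volume (0 : Vec d) (by linarith : (0:ℝ) ≤ r₁)]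
            ring
      have hcomb : (∫⁻ y in {y : Vec d | r < ‖x - y‖ ∧ r < ‖y‖},
          ENNReal.ofReal (f ‖x - y‖ * f ‖y‖)) ≤ N₂ * ENNReal.ofReal (f ‖x‖) := by
        calc (∫⁻ y in {y : Vec d | r < ‖x - y‖ ∧ r < ‖y‖}, ENNReal.ofReal (f ‖x - y‖ * f ‖y‖))
            ≤ ∫⁻ y in Aset ∪ Bset ∪ B'set, ENNReal.ofReal (f ‖x - y‖ * f ‖y‖) :=
            lintegral_mono' (Measure.restrict_mono hsplit le_rfl) le_rfl
          _ ≤ (∫⁻ y in Aset ∪ Bset, ENNReal.ofReal (f ‖x - y‖ * f ‖y‖)) +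
              ∫⁻ y in B'set, ENNReal.ofReal (f ‖x - y‖ * f ‖y‖) :=
            lintegral_union_le _ _ _
          _ ≤ ((∫⁻ y in Aset, ENNReal.ofReal (f ‖x - y‖ * f ‖y‖)) +
              ∫⁻ y in Bset, ENNReal.ofReal (f ‖x - y‖ * f ‖y‖)) +
              ∫⁻ y in B'set, ENNReal.ofReal (f ‖x - y‖ * f ‖y‖) :=
            add_le_add_left (lintegral_union_le _ _ _) _
          _ ≤ (ENNReal.ofReal (κ₁⁻¹ * κ₁⁻¹ * κ₂) * ENNReal.ofReal (f ‖x‖) +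
              ENNReal.ofReal (f r * Λ) * volume (Metric.closedBall (0 : Vec d) r₁) *
                ENNReal.ofReal (f ‖x‖)) +
              ENNReal.ofReal (f r * Λ) * volume (Metric.closedBall (0 : Vec d) r₁) *
                ENNReal.ofReal (f ‖x‖) :=
            add_le_add (add_le_add hA hB) hB'
          _ = N₂ * ENNReal.ofReal (f ‖x‖) := by rw [hN₂def]; ring
      exact le_trans (ENNReal.div_le_of_le_mul hcomb) le_add_self
  rw [bigK]
  exact lt_of_le_of_lt (iSup₂_le fun x hx => hbound x hx) (ENNReal.add_lt_top.2 ⟨hN₁fin, hN₂fin⟩)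
end
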